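/- arXiv:2107.06620 — 2 statements merged into one kernel-verified Lean document; each statement's English description precedes it below -/
import Mathlib

section
/- The ε-horizontal gradient satisfies: (i) ∇_ε f = ∇_ε(∇f) for every f : T → ℂ, where ∇ = id − Σ; (ii) for every p ∈ [1,∞], ‖∇_ε* f‖_{L^p(μ)} ≤ ‖ε‖_∞ ‖f‖_{L^p(μ)} and ‖∇_ε* f‖_{L^{1,∞}(μ)} ≤ ‖ε‖_∞ ‖f‖_{L^{1,∞}(μ)}; (iii) for every p ∈ [1,∞], ‖∇_ε f‖_{L^p(μ)} ≤ ‖ε‖_∞ ‖f‖_{L^p(μ)} and ‖∇_ε f‖_{L^{1,∞}(μ)} ≤ q ‖ε‖_∞ ‖f‖_{L^{1,∞}(μ)}; (iv) for all f, g ∈ L²(μ) and all m, n ∈ ℕ, ⟨Σⁿ∇_ε* f, Σᵐ∇_ε* g⟩_{L²(μ)} = δ_{nm} ⟨∇_ε* f, ∇_ε* g⟩_{L²(μ)}. -/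
open MeasureTheory ENNReal Set Function
open scoped NNReal ENNReal Classical

noncomputable section

/-- A homogeneous tree of degree `q+1` with a distinguished end (mythical ancestor),
encoded through its graph distance `dist`, horocyclic level function `level`,
and predecessor map `pred`. -/
structure FlowTree (q : ℕ) where
  V : Type
  countableV : Countable V
  dist : V → V → ℕ
  level : V → ℤ
  pred : V → V
  dist_self : ∀ x, dist x x = 0
  eq_of_dist_eq_zero : ∀ x y, dist x y = 0 → x = y
  dist_comm : ∀ x y, dist x y = dist y x
  dist_triangle : ∀ x y z, dist x z ≤ dist x y + dist y z
  level_pred : ∀ x, level (pred x) = level x + 1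
  succ_finite : ∀ x, Set.Finite {y | pred y = x}
  succ_card : ∀ x, Nat.card {y // pred y = x} = q
  dist_le : ∀ (x y : V) (n m : ℕ), pred^[n] x = pred^[m] y → dist x y ≤ n + m
  dist_spec : ∀ x y, ∃ n m : ℕ, pred^[n] x = pred^[m] y ∧ n + m = dist x y

namespace FlowTree

variable {q : ℕ} (S : FlowTree q)

/-- The canonical flow measure weight `μ(x) = q^{ℓ(x)}`, as an extended nonnegative real. -/
def w (x : S.V) : ℝ≥0∞ := (q : ℝ≥0∞) ^ ((S.level x : ℤ) : ℝ)

/-- The canonical flow measure weight `μ(x) = q^{ℓ(x)}`, as a real number. -/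
def wR (x : S.V) : ℝ := (q : ℝ) ^ (S.level x)

/-- The canonical flow measure of a set `E ⊆ T`. -/
def muS (E : Set S.V) : ℝ≥0∞ := ∑' x : E, S.w x

/-- The `L^p(μ)` (quasi)norm, `p ∈ [1,∞]`. -/
def lpNorm (p : ℝ≥0∞) {E : Type*} [NNNorm E] (f : S.V → E) : ℝ≥0∞ :=
  if p = ∞ then ⨆ x, (‖f x‖₊ : ℝ≥0∞)
  else (∑' x, (‖f x‖₊ : ℝ≥0∞) ^ p.toReal * S.w x) ^ (1 / p.toReal)

/-- The weak `L^{1,∞}(μ)` quasinorm `sup_{λ>0} λ · μ({|f| > λ})`. -/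
def wkNorm {E : Type*} [NNNorm E] (f : S.V → E) : ℝ≥0∞ :=
  ⨆ t : ℝ≥0, (t : ℝ≥0∞) * S.muS {x | t < ‖f x‖₊}

/-- `Σf(x) = f(𝔭(x))`. -/
def sig (f : S.V → ℂ) : S.V → ℂ := fun x => f (S.pred x)

/-- `Σ*f(x) = (1/q) Σ_{y ∈ succ(x)} f(y)`. -/
def sigStar (f : S.V → ℂ) : S.V → ℂ :=
  fun x => (q : ℂ)⁻¹ * ∑' y : {y | S.pred y = x}, f y.1

/-- The flow gradient `∇ = id − Σ`. -/
def grad (f : S.V → ℂ) : S.V → ℂ := fun x => f x - f (S.pred x)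

/-- `∇* = id − Σ*`. -/
def gradStar (f : S.V → ℂ) : S.V → ℂ := fun x => f x - S.sigStar f x

/-- The modulus of the gradient `Df(x) = Σ_{y ∼ x} |f(x) − f(y)|`. -/
def Dmod (f : S.V → ℂ) : S.V → ℝ :=
  fun x => ∑' y : {y | S.dist x y = 1}, ‖f x - f y.1‖

/-- `Σ̃_n = Σ^n` for `n ≥ 0` and `(Σ*)^{−n}` for `n < 0`. -/
def sigTilde (n : ℤ) (f : S.V → ℂ) : S.V → ℂ :=
  if 0 ≤ n then (S.sig)^[n.toNat] f else (S.sigStar)^[(-n).toNat] f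

/-- `Σ*` acting on real-valued functions. -/
def sigStarR (f : S.V → ℝ) : S.V → ℝ :=
  fun x => (q : ℝ)⁻¹ * ∑' y : {y | S.pred y = x}, f y.1

/-- The flow Laplacian `𝓛 = id − (Σ + Σ*)/2`, acting pointwise on real functions. -/
def lapR (f : S.V → ℝ) : S.V → ℝ :=
  fun x => f x - (f (S.pred x) + S.sigStarR f x) / 2

/-- `δ_y/μ(y)`, the normalized delta at `y`. -/
def deltaMu (y : S.V) : S.V → ℝ := fun z => if z = y then (S.wR y)⁻¹ else 0

/-- The heat kernel `H_t(x,y)` of the flow Laplacian, i.e. `(e^{−t𝓛} (δ_y/μ(y)))(x)`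
computed via the exponential power series of the bounded operator `𝓛`. -/
def Hker (t : ℝ) (x y : S.V) : ℝ :=
  ∑' n : ℕ, ((-t) ^ n / (n.factorial : ℝ)) * ((S.lapR)^[n] (S.deltaMu y)) x

/-- The integral kernel `K(x,y)` of `𝓛^{−1/2}`, by subordination. -/
def Kker (x y : S.V) : ℝ :=
  (Real.sqrt Real.pi)⁻¹ * ∫ t in Set.Ioi (0 : ℝ), S.Hker t x y * t ^ (-(1 : ℝ)/2)

/-- The Riesz transform `𝓡 = ∇𝓛^{−1/2}`, defined on finitely supported functions. -/
def riesz (f : S.V → ℂ) : S.V → ℂ :=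
  fun x => ∑' y, ((S.Kker x y - S.Kker (S.pred x) y : ℝ) : ℂ) * f y * (S.wR y : ℂ)

/-- The integral operator with almost-radial kernel `q^{−ℓ(x)/2} G(d(x,y)) q^{−ℓ(y)/2}`. -/
def kernelOp (G : ℕ → ℂ) (f : S.V → ℂ) : S.V → ℂ :=
  fun x => ∑' y, (((q : ℝ) ^ (-((S.level x : ℤ) : ℝ)/2) * (q : ℝ) ^ (-((S.level y : ℤ) : ℝ)/2) : ℝ) : ℂ)
    * G (S.dist x y) * f y * (S.wR y : ℂ)

/-- The ε-horizontal gradient `∇_ε f(x) = (1/q) Σ_{y ∈ succ(x)} ε(y) f(y)`. -/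
def hgrad (ε f : S.V → ℂ) : S.V → ℂ :=
  fun x => (q : ℂ)⁻¹ * ∑' y : {y | S.pred y = x}, ε y.1 * f y.1

/-- The adjoint ε-horizontal gradient `∇_ε* f(x) = conj(ε(x)) f(𝔭(x))`. -/
def hgradStar (ε f : S.V → ℂ) : S.V → ℂ :=
  fun x => (starRingEnd ℂ) (ε x) * f (S.pred x)

/-- `‖ε‖_∞`. -/
def epsSup (ε : S.V → ℂ) : ℝ≥0∞ := ⨆ x, (‖ε x‖₊ : ℝ≥0∞)

/-- The `L²(μ)` inner product. -/
def inner2 (f g : S.V → ℂ) : ℂ := ∑' x, f x * (starRingEnd ℂ) (g x) * (S.wR x : ℂ)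

/-- `y ≤ x` iff `d(x,y) = ℓ(x) − ℓ(y)`. -/
def le' (y x : S.V) : Prop := (S.dist x y : ℤ) = S.level x - S.level y

/-- Admissible trapezoids of `(T,μ)`. -/
def IsAdmissibleTrapezoid (F : Set S.V) : Prop :=
  (∃ x, F = {x}) ∨
  ∃ (x₀ : S.V) (h1 h2 : ℕ), 0 < h1 ∧ 2 * h1 ≤ h2 ∧ h2 ≤ 12 * h1 ∧
    F = {x | S.le' x x₀ ∧ S.level x₀ - (h2 : ℤ) < S.level x ∧ S.level x ≤ S.level x₀ - (h1 : ℤ)}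

/-- `(1,∞)`-atoms of `(T,μ)`. -/
def IsOneInftyAtom (a : S.V → ℂ) : Prop :=
  ∃ F : Set S.V, S.IsAdmissibleTrapezoid F ∧ Function.support a ⊆ F ∧
    (∑' x, a x * (S.wR x : ℂ)) = 0 ∧ ∀ x, (‖a x‖₊ : ℝ≥0∞) ≤ (S.muS F)⁻¹

end FlowTree

namespace ZRiesz

/-- The discrete Laplacian on `ℤ`. -/
def deltaZ (F : ℤ → ℝ) : ℤ → ℝ := fun n => F n - (F (n + 1) + F (n - 1)) / 2

/-- The heat kernel `h_t^ℤ = e^{−tΔ_ℤ} δ_0` on `ℤ`, via the exponential power series. -/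
def heatZ (t : ℝ) (n : ℤ) : ℝ :=
  ∑' k : ℕ, ((-t) ^ k / (k.factorial : ℝ)) *
    (deltaZ^[k] (fun m => if m = 0 then (1 : ℝ) else 0)) n

/-- Kernel of the Riesz transform on `ℤ`: `k_ℤ(n) = π^{−1/2} ∫₀^∞ (∇_ℤ h_t^ℤ)(n) t^{−1/2} dt`. -/
def kZ (n : ℤ) : ℝ :=
  (Real.sqrt Real.pi)⁻¹ * ∫ t in Set.Ioi (0 : ℝ), (heatZ t n - heatZ t (n + 1)) * t ^ (-(1 : ℝ)/2)

/-- Kernel of the skew-symmetric part: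
`k̃_ℤ(n) = π^{−1/2} ∫₀^∞ (∇̃_ℤ h_t^ℤ)(n) t^{−1/2} dt`. -/
def ktZ (n : ℤ) : ℝ :=
  (Real.sqrt Real.pi)⁻¹ *
    ∫ t in Set.Ioi (0 : ℝ), (heatZ t (n - 1) - heatZ t (n + 1)) * t ^ (-(1 : ℝ)/2)

/-- The closed formula `k̃_ℤ(m) = (2√2/π) m/(m² − 1/4)`. -/
def ktZc (m : ℤ) : ℝ := (2 * Real.sqrt 2 / Real.pi) * (m : ℝ) / ((m : ℝ) ^ 2 - 1/4)

/-- `G(n) = Σ_{k≥0} q^{−(n+2k)/2} k̃_ℤ(n+2k+1)` (subordination kernel version). -/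
def Gint (q : ℕ) (n : ℕ) : ℝ :=
  ∑' k : ℕ, (q : ℝ) ^ (-(((n : ℝ)) + 2 * (k : ℝ))/2) * ktZ ((n : ℤ) + 2 * (k : ℤ) + 1)

/-- `G(n) = Σ_{k≥0} q^{−(n+2k)/2} k̃_ℤ(n+2k+1)` (closed formula version). -/
def Gc (q : ℕ) (n : ℕ) : ℝ :=
  ∑' k : ℕ, (q : ℝ) ^ (-(((n : ℝ)) + 2 * (k : ℝ))/2) * ktZc ((n : ℤ) + 2 * (k : ℤ) + 1)

/-- The `ℓ^p(ℤ)` norm. -/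
def zlpNorm (p : ℝ≥0∞) (F : ℤ → ℂ) : ℝ≥0∞ :=
  if p = ∞ then ⨆ n, (‖F n‖₊ : ℝ≥0∞)
  else (∑' n : ℤ, (‖F n‖₊ : ℝ≥0∞) ^ p.toReal) ^ (1 / p.toReal)

/-- The `ℓ^{1,∞}(ℕ)` quasinorm. -/
def natWk (F : ℕ → ℂ) : ℝ≥0∞ :=
  ⨆ t : ℝ≥0, (t : ℝ≥0∞) * ∑' (_ : {n : ℕ | t < ‖F n‖₊}), (1 : ℝ≥0∞)

end ZRiesz

/-- The punctured boundary `Ω = ∂T \ {ω_*}` of the tree, together with the measure `ν`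
with `ν(Ω_x) = q^{ℓ(x)}`.  `vert ω n` is the vertex `ω_n` of level `n` on the geodesic
`[ω, ω_*]`. -/
structure FlowTreeBoundary {q : ℕ} (S : FlowTree q) where
  Ω : Type
  mΩ : MeasurableSpace Ω
  ν : @MeasureTheory.Measure Ω mΩ
  vert : Ω → ℤ → S.V
  level_vert : ∀ ω n, S.level (vert ω n) = n
  pred_vert : ∀ ω n, S.pred (vert ω n) = vert ω (n + 1)
  vert_surj : ∀ x : S.V, ∃ ω, vert ω (S.level x) = x
  vert_inj : ∀ ω ω', (∀ n, vert ω n = vert ω' n) → ω = ω'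
  meas_cone : ∀ x : S.V, @MeasurableSet Ω mΩ {ω | vert ω (S.level x) = x}
  nu_cone : ∀ x : S.V, ν {ω | vert ω (S.level x) = x} = (q : ℝ≥0∞) ^ ((S.level x : ℤ) : ℝ)

attribute [instance] FlowTreeBoundary.mΩ

namespace FlowTreeBoundary

variable {q : ℕ} {S : FlowTree q} (B : FlowTreeBoundary S)

/-- The product measure `ν × #` on `Ω × ℤ`. -/
def pm : MeasureTheory.Measure (B.Ω × ℤ) := B.ν.prod MeasureTheory.Measure.count

/-- `Ω_x = {ω : x ∈ [ω, ω_*]}`. -/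
def cone (x : S.V) : Set B.Ω := {ω | B.vert ω (S.level x) = x}

/-- The lifting operator `Φf(ω,n) = f(ω_n)`. -/
def lift (f : S.V → ℂ) : B.Ω × ℤ → ℂ := fun p => f (B.vert p.1 p.2)

/-- The lifting operator on `ℝ≥0∞`-valued functions. -/
def liftNN (f : S.V → ℝ≥0∞) : B.Ω × ℤ → ℝ≥0∞ := fun p => f (B.vert p.1 p.2)

/-- The adjoint `Φ*g(x) = ν(Ω_x)^{−1} ∫_{Ω_x} g(ω, ℓ(x)) dν(ω)`. -/
def liftStar (g : B.Ω × ℤ → ℂ) : S.V → ℂ :=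
  fun x => ((B.ν (B.cone x)).toReal)⁻¹ * ∫ ω in B.cone x, g (ω, S.level x) ∂B.ν

/-- The adjoint `Φ*` on `ℝ≥0∞`-valued functions. -/
def liftStarNN (g : B.Ω × ℤ → ℝ≥0∞) : S.V → ℝ≥0∞ :=
  fun x => (B.ν (B.cone x))⁻¹ * ∫⁻ ω in B.cone x, g (ω, S.level x) ∂B.ν

end FlowTreeBoundary

/-- The weak `L^{1,∞}(μ)` quasinorm with respect to a measure. -/
def wkMeas {α : Type*} [MeasurableSpace α] (μ : MeasureTheory.Measure α) (g : α → ℂ) : ℝ≥0∞ :=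
  ⨆ t : ℝ≥0, (t : ℝ≥0∞) * μ {a | t < ‖g a‖₊}

/-- The weak `L^{1,∞}(μ)` quasinorm for `ℝ≥0∞`-valued functions. -/
def wkMeasNN {α : Type*} [MeasurableSpace α] (μ : MeasureTheory.Measure α) (g : α → ℝ≥0∞) :
    ℝ≥0∞ :=
  ⨆ t : ℝ≥0, (t : ℝ≥0∞) * μ {a | (t : ℝ≥0∞) < g a}

end

/-!
The flow measure is invariant under the predecessor map: the `q` successors of `u` each carry
mass `μ(u)/q`, so `∑ F(𝔭 x) μ(x) = ∑ F(u) μ(u)`. Hence `Σ` preserves the `L^p(μ)` norms, the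
measure of preimages and the `L²(μ)` inner product, which gives the bounds for `∇_ε* = ε̄ · Σ`.
The gradient `∇_ε` is dominated pointwise by `‖ε‖_∞ Σ*|f|`, and Jensen's inequality on the
successor averages bounds `Σ*` on `L^p(μ)`; a superlevel set of `∇_ε f` lies in the `𝔭`-image of
one of `f`, which has at most `q` times its measure. Finally `⟨∇_ε* f, Σ h⟩ = 0`, because
grouping the sum over the successors of each vertex produces `∑_{y ∈ succ(u)} ε(y) = 0`; together
with the invariance of the inner product under `Σ` this gives the orthogonality relations.
-/

namespace FlowTree

variable {q : ℕ} (S : FlowTree q)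

noncomputable instance (x : S.V) : Fintype {y | S.pred y = x} := (S.succ_finite x).fintype

lemma card_succ (x : S.V) : Fintype.card {y | S.pred y = x} = q := by
  rw [← Nat.card_eq_fintype_card]
  exact S.succ_card x

lemma tsum_eq_tsum_tsum_succ {α : Type*} [AddCommMonoid α] [TopologicalSpace α]
    [ContinuousAdd α] [T3Space α] {F : S.V → α} (hF : Summable F) :
    ∑' x, F x = ∑' u, ∑' y : {y | S.pred y = u}, F y := by
  rw [← (Equiv.sigmaFiberEquiv S.pred).tsum_eq]
  have (u : S.V) : Finite {y // S.pred y = u} := (S.succ_finite u).to_subtype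
  exact Summable.tsum_sigma' (fun u => Summable.of_finite)
    ((Equiv.sigmaFiberEquiv S.pred).summable_iff.2 hF)

lemma level_of_pred_eq {x y : S.V} (h : S.pred y = x) : S.level y = S.level x - 1 := by
  have := S.level_pred y
  rw [h] at this
  omega

lemma w_of_pred_eq (hq : q ≠ 0) {x y : S.V} (h : S.pred y = x) :
    S.w y = (q : ℝ≥0∞)⁻¹ * S.w x := by
  rw [w, w, S.level_of_pred_eq h, Int.cast_sub, Int.cast_one, sub_eq_add_neg,
    ENNReal.rpow_add _ _ (by exact_mod_cast hq) (natCast_ne_top q), ENNReal.rpow_neg_one,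
    mul_comm]

lemma w_pred (hq : q ≠ 0) (x : S.V) : S.w (S.pred x) = q * S.w x := by
  rw [S.w_of_pred_eq hq (rfl : S.pred x = S.pred x), ← mul_assoc,
    ENNReal.mul_inv_cancel (by exact_mod_cast hq) (natCast_ne_top q), one_mul]

lemma wR_of_pred_eq (hq : q ≠ 0) {x y : S.V} (h : S.pred y = x) :
    (S.wR y : ℂ) = (q : ℂ)⁻¹ * S.wR x := by
  rw [wR, wR, S.level_of_pred_eq h, zpow_sub₀ (by exact_mod_cast hq), zpow_one]
  push_cast
  ring

lemma tsum_succ_w (hq : q ≠ 0) (x : S.V) : ∑' y : {y | S.pred y = x}, S.w y = S.w x := by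
  rw [tsum_fintype, Finset.sum_congr rfl fun y _ => S.w_of_pred_eq hq y.2, Finset.sum_const,
    Finset.card_univ, card_succ, nsmul_eq_mul, ← mul_assoc,
    ENNReal.mul_inv_cancel (by exact_mod_cast hq) (natCast_ne_top q), one_mul]

lemma tsum_succ_wR (hq : q ≠ 0) (x : S.V) :
    ∑' y : {y | S.pred y = x}, (S.wR y : ℂ) = S.wR x := by
  rw [tsum_fintype, Finset.sum_congr rfl fun y _ => S.wR_of_pred_eq hq y.2, Finset.sum_const,
    Finset.card_univ, card_succ, nsmul_eq_mul, ← mul_assoc,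
    mul_inv_cancel₀ (by exact_mod_cast hq), one_mul]

lemma enorm_wR (hq : q ≠ 0) (x : S.V) : ‖(S.wR x : ℂ)‖ₑ = S.w x := by
  have : S.wR x = (((q : ℝ≥0) ^ S.level x : ℝ≥0) : ℝ) := by push_cast; rfl
  rw [this, w, ENNReal.rpow_intCast, enorm_eq_nnnorm, Complex.nnnorm_real, NNReal.nnnorm_eq,
    ENNReal.coe_zpow (by exact_mod_cast hq), ENNReal.coe_natCast]

lemma tsum_comp_pred_mul_w (hq : q ≠ 0) (F : S.V → ℝ≥0∞) :
    ∑' x, F (S.pred x) * S.w x = ∑' u, F u * S.w u := by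
  rw [S.tsum_eq_tsum_tsum_succ ENNReal.summable]
  refine tsum_congr fun u => ?_
  calc ∑' y : {y | S.pred y = u}, F (S.pred y) * S.w y
      = ∑' y : {y | S.pred y = u}, F u * S.w y := tsum_congr fun y => by rw [y.2]
    _ = F u * S.w u := by rw [ENNReal.tsum_mul_left, S.tsum_succ_w hq]

lemma summable_comp_pred_mul_wR_iff (hq : q ≠ 0) {F : S.V → ℂ} :
    (Summable fun x => F (S.pred x) * S.wR x) ↔ Summable fun u => F u * S.wR u := by
  have summable_iff (G : S.V → ℂ) : Summable G ↔ ∑' x, ‖G x‖ₑ ≠ ∞ :=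
    (tsum_enorm_ne_top_iff_summable_norm.trans (summable_norm_iff (E := ℂ))).symm
  simp only [summable_iff, enorm_mul, S.enorm_wR hq]
  rw [S.tsum_comp_pred_mul_w hq fun u => ‖F u‖ₑ]

-- Both sides are summable or neither is, so the junk value `0` covers the non-summable case.
lemma tsum_comp_pred_mul_wR (hq : q ≠ 0) (F : S.V → ℂ) :
    ∑' x, F (S.pred x) * S.wR x = ∑' u, F u * S.wR u := by
  by_cases hF : Summable fun u => F u * S.wR u
  · rw [S.tsum_eq_tsum_tsum_succ ((S.summable_comp_pred_mul_wR_iff hq).2 hF)]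
    refine tsum_congr fun u => ?_
    calc ∑' y : {y | S.pred y = u}, F (S.pred y) * S.wR y
        = ∑' y : {y | S.pred y = u}, F u * S.wR y := tsum_congr fun y => by rw [y.2]
      _ = F u * S.wR u := by rw [tsum_mul_left, S.tsum_succ_wR hq]
  · rw [tsum_eq_zero_of_not_summable hF,
      tsum_eq_zero_of_not_summable (mt (S.summable_comp_pred_mul_wR_iff hq).1 hF)]

section Inner

variable (hq : q ≠ 0)
include hq

lemma inner2_comp_pred (a b : S.V → ℂ) :
    S.inner2 (fun x => a (S.pred x)) (fun x => b (S.pred x)) = S.inner2 a b :=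
  S.tsum_comp_pred_mul_wR hq fun u => a u * starRingEnd ℂ (b u)

lemma inner2_comp_iterate_pred (a b : S.V → ℂ) (n : ℕ) :
    S.inner2 (fun x => a (S.pred^[n] x)) (fun x => b (S.pred^[n] x)) = S.inner2 a b := by
  induction n with
  | zero => rfl
  | succ n ih =>
    simp only [iterate_succ_apply]
    exact (S.inner2_comp_pred hq (fun u => a (S.pred^[n] u)) fun u => b (S.pred^[n] u)).trans ih

end Inner

lemma inner2_eq_conj (a b : S.V → ℂ) : S.inner2 a b = starRingEnd ℂ (S.inner2 b a) := by
  rw [inner2, inner2, Complex.conj_tsum]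
  refine tsum_congr fun x => ?_
  rw [map_mul, map_mul, Complex.conj_conj, Complex.conj_ofReal]
  ring

variable (eps : S.V → ℂ)

lemma hgrad_grad (hz : ∀ x : S.V, ∑' y : {y | S.pred y = x}, eps y = 0) (f : S.V → ℂ) :
    S.hgrad eps f = S.hgrad eps (S.grad f) := by
  funext x
  have hsplit (y : {y | S.pred y = x}) :
      eps y * (f y - f (S.pred y)) = eps y * f y - eps y * f x := by
    rw [y.2, mul_sub]
  simp only [hgrad, grad]
  rw [tsum_congr hsplit, Summable.tsum_sub .of_finite .of_finite, tsum_mul_right, hz x, zero_mul,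
    sub_zero]

section Orthogonality

variable (hq : q ≠ 0) (hz : ∀ x : S.V, ∑' y : {y | S.pred y = x}, eps y = 0)
include hq hz

lemma inner2_hgradStar_comp_pred (f h : S.V → ℂ) :
    S.inner2 (S.hgradStar eps f) (fun x => h (S.pred x)) = 0 := by
  by_cases hs : Summable fun x => S.hgradStar eps f x * starRingEnd ℂ (h (S.pred x)) * S.wR x
  · -- The sum over the successors of `u` carries the factor `conj (∑ y ∈ succ u, ε y) = 0`.
    have hfiber (u : S.V) : ∑' y : {y | S.pred y = u},
        S.hgradStar eps f y * starRingEnd ℂ (h (S.pred y)) * S.wR y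
          = starRingEnd ℂ (∑' y : {y | S.pred y = u}, eps y)
            * (f u * starRingEnd ℂ (h u) * ((q : ℂ)⁻¹ * S.wR u)) := by
      rw [Complex.conj_tsum, ← tsum_mul_right]
      refine tsum_congr fun y => ?_
      rw [hgradStar, S.wR_of_pred_eq hq y.2, y.2]
      ring
    rw [inner2, S.tsum_eq_tsum_tsum_succ hs]
    simp only [hfiber, hz, map_zero, zero_mul, tsum_zero]
  · exact tsum_eq_zero_of_not_summable hs

lemma inner2_iterate_pred_hgradStar_of_lt (f g : S.V → ℂ) {n m : ℕ} (hnm : n < m) :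
    S.inner2 (fun x => S.hgradStar eps f (S.pred^[n] x))
      (fun x => S.hgradStar eps g (S.pred^[m] x)) = 0 := by
  obtain ⟨k, rfl⟩ : ∃ k, m = k + 1 + n := ⟨m - n - 1, by omega⟩
  have hsplit : (fun x => S.hgradStar eps g (S.pred^[k + 1 + n] x))
      = fun x => (fun u => S.hgradStar eps g (S.pred^[k] (S.pred u))) (S.pred^[n] x) := by
    funext x
    rw [iterate_add_apply, iterate_succ_apply]
  rw [hsplit]
  exact (S.inner2_comp_iterate_pred hq _ _ n).trans (S.inner2_hgradStar_comp_pred eps hq hz f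
    fun v => S.hgradStar eps g (S.pred^[k] v))

lemma inner2_iterate_pred_hgradStar (f g : S.V → ℂ) (n m : ℕ) :
    S.inner2 (fun x => S.hgradStar eps f (S.pred^[n] x))
        (fun x => S.hgradStar eps g (S.pred^[m] x))
      = if n = m then S.inner2 (S.hgradStar eps f) (S.hgradStar eps g) else 0 := by
  rcases lt_trichotomy n m with hnm | rfl | hmn
  · rw [if_neg hnm.ne, S.inner2_iterate_pred_hgradStar_of_lt eps hq hz f g hnm]
  · rw [if_pos rfl, S.inner2_comp_iterate_pred hq]
  · rw [if_neg hmn.ne', inner2_eq_conj, S.inner2_iterate_pred_hgradStar_of_lt eps hq hz g f hmn,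
      map_zero]

end Orthogonality

section Measure

lemma muS_mono {A B : Set S.V} (h : A ⊆ B) : S.muS A ≤ S.muS B :=
  ENNReal.tsum_mono_subtype S.w h

lemma muS_preimage_pred (hq : q ≠ 0) (A : Set S.V) : S.muS (S.pred ⁻¹' A) = S.muS A := by
  have hind (x : S.V) : (S.pred ⁻¹' A).indicator S.w x = A.indicator 1 (S.pred x) * S.w x := by
    by_cases hx : S.pred x ∈ A <;> simp [hx]
  rw [muS, muS, tsum_subtype, tsum_subtype, tsum_congr hind, S.tsum_comp_pred_mul_w hq]
  refine tsum_congr fun u => ?_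
  by_cases hu : u ∈ A <;> simp [hu]

lemma muS_image_pred_le (hq : q ≠ 0) (A : Set S.V) :
    S.muS (S.pred '' A) ≤ q * S.muS A := by
  have hsurj : Surjective fun y : A => (⟨S.pred y, y, y.2, rfl⟩ : S.pred '' A) := by
    rintro ⟨_, y, hy, rfl⟩
    exact ⟨⟨y, hy⟩, rfl⟩
  calc S.muS (S.pred '' A) ≤ ∑' y : A, S.w (S.pred y) :=
        ENNReal.tsum_le_tsum_comp_of_surjective hsurj fun x : S.pred '' A => S.w x
    _ = q * S.muS A := by simp only [S.w_pred hq, ENNReal.tsum_mul_left, muS]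

end Measure

/-- `Σ*` acting on `ℝ≥0∞`-valued functions. -/
noncomputable def sigStarNN (F : S.V → ℝ≥0∞) (x : S.V) : ℝ≥0∞ :=
  (q : ℝ≥0∞)⁻¹ * ∑' y : {y | S.pred y = x}, F y

section SigStarNN

variable {S} (hq : q ≠ 0)
include hq

lemma sigStarNN_le {F : S.V → ℝ≥0∞} {x : S.V} {c : ℝ≥0∞} (h : ∀ y, S.pred y = x → F y ≤ c) :
    S.sigStarNN F x ≤ c := by
  calc S.sigStarNN F x ≤ (q : ℝ≥0∞)⁻¹ * ∑ _y : {y | S.pred y = x}, c := by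
        rw [sigStarNN, tsum_fintype]
        gcongr with y
        exact h y y.2
    _ = c := by
        rw [Finset.sum_const, Finset.card_univ, card_succ, nsmul_eq_mul, ← mul_assoc,
          ENNReal.inv_mul_cancel (by exact_mod_cast hq) (natCast_ne_top q), one_mul]

lemma sigStarNN_rpow_le (F : S.V → ℝ≥0∞) (x : S.V) {r : ℝ} (hr : 1 ≤ r) :
    S.sigStarNN F x ^ r ≤ S.sigStarNN (fun y => F y ^ r) x := by
  have hweights : ∑ _y : {y | S.pred y = x}, (q : ℝ≥0∞)⁻¹ = 1 := by
    rw [Finset.sum_const, Finset.card_univ, card_succ, nsmul_eq_mul,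
      ENNReal.mul_inv_cancel (by exact_mod_cast hq) (natCast_ne_top q)]
  simpa only [sigStarNN, tsum_fintype, Finset.mul_sum] using
    ENNReal.rpow_arith_mean_le_arith_mean_rpow Finset.univ _
      (fun y : {y | S.pred y = x} => F y) hweights hr

lemma tsum_sigStarNN_mul_w (F : S.V → ℝ≥0∞) :
    ∑' x, S.sigStarNN F x * S.w x = ∑' y, F y * S.w y := by
  rw [S.tsum_eq_tsum_tsum_succ (ENNReal.summable (f := fun y => F y * S.w y))]
  refine tsum_congr fun x => ?_
  rw [sigStarNN, mul_comm, ← mul_assoc, ← ENNReal.tsum_mul_left]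
  exact tsum_congr fun y => by rw [S.w_of_pred_eq hq y.2]; ring

end SigStarNN

lemma sigStarNN_const_mul (c : ℝ≥0∞) (F : S.V → ℝ≥0∞) (x : S.V) :
    S.sigStarNN (fun y => c * F y) x = c * S.sigStarNN F x := by
  rw [sigStarNN, sigStarNN, ENNReal.tsum_mul_left]
  ring

lemma coe_nnnorm_le_epsSup (x : S.V) : (‖eps x‖₊ : ℝ≥0∞) ≤ S.epsSup eps :=
  le_iSup (fun x => (‖eps x‖₊ : ℝ≥0∞)) x

lemma epsSup_ne_top (hb : ∃ M : ℝ, ∀ x, ‖eps x‖ ≤ M) : S.epsSup eps ≠ ∞ := by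
  obtain ⟨M, hM⟩ := hb
  refine ne_top_of_le_ne_top (coe_ne_top (r := M.toNNReal)) (iSup_le fun x => ?_)
  rw [coe_le_coe, ← NNReal.coe_le_coe, coe_nnnorm]
  exact (hM x).trans (Real.le_coe_toNNReal M)

lemma nnnorm_le_toNNReal_epsSup (hb : ∃ M : ℝ, ∀ x, ‖eps x‖ ≤ M) (x : S.V) :
    ‖eps x‖₊ ≤ (S.epsSup eps).toNNReal := by
  rw [← coe_le_coe, coe_toNNReal (S.epsSup_ne_top eps hb)]
  exact S.coe_nnnorm_le_epsSup eps x

lemma coe_nnnorm_hgradStar (f : S.V → ℂ) (x : S.V) :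
    (‖S.hgradStar eps f x‖₊ : ℝ≥0∞) = ‖eps x‖₊ * ‖f (S.pred x)‖₊ := by
  rw [hgradStar, nnnorm_mul, RCLike.nnnorm_conj, coe_mul]

lemma coe_nnnorm_hgrad_le (hq : q ≠ 0) (f : S.V → ℂ) (x : S.V) :
    (‖S.hgrad eps f x‖₊ : ℝ≥0∞) ≤ S.sigStarNN (fun y => S.epsSup eps * ‖f y‖₊) x := by
  calc (‖S.hgrad eps f x‖₊ : ℝ≥0∞)
      ≤ (q : ℝ≥0∞)⁻¹ * ∑ y : {y | S.pred y = x}, (‖eps y * f y‖₊ : ℝ≥0∞) := by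
        rw [hgrad, tsum_fintype, nnnorm_mul, coe_mul, nnnorm_inv, Complex.nnnorm_natCast,
          coe_inv (by exact_mod_cast hq), coe_natCast]
        gcongr
        exact_mod_cast nnnorm_sum_le _ _
    _ ≤ S.sigStarNN (fun y => S.epsSup eps * ‖f y‖₊) x := by
        rw [sigStarNN, tsum_fintype]
        gcongr with y
        rw [nnnorm_mul, coe_mul]
        exact mul_le_mul_left (S.coe_nnnorm_le_epsSup eps y) _

lemma lpNorm_le_mul_of {E F : Type*} [NNNorm E] [NNNorm F] {g : S.V → E} {f : S.V → F}
    {C p : ℝ≥0∞} (hp : 1 ≤ p) (hsup : ∀ x, (‖g x‖₊ : ℝ≥0∞) ≤ C * ⨆ u, (‖f u‖₊ : ℝ≥0∞))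
    (hsum : ∀ r : ℝ, 1 ≤ r →
      ∑' x, (‖g x‖₊ : ℝ≥0∞) ^ r * S.w x ≤ C ^ r * ∑' x, (‖f x‖₊ : ℝ≥0∞) ^ r * S.w x) :
    S.lpNorm p g ≤ C * S.lpNorm p f := by
  unfold lpNorm
  split_ifs with hpt
  · exact iSup_le hsup
  · have hr : 1 ≤ p.toReal := by simpa using ENNReal.toReal_mono hpt hp
    have hr0 : 0 < p.toReal := one_pos.trans_le hr
    calc (∑' x, (‖g x‖₊ : ℝ≥0∞) ^ p.toReal * S.w x) ^ (1 / p.toReal)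
        ≤ (C ^ p.toReal * ∑' x, (‖f x‖₊ : ℝ≥0∞) ^ p.toReal * S.w x) ^ (1 / p.toReal) := by
          gcongr
          exact hsum _ hr
      _ = C * (∑' x, (‖f x‖₊ : ℝ≥0∞) ^ p.toReal * S.w x) ^ (1 / p.toReal) := by
          rw [ENNReal.mul_rpow_of_nonneg _ _ (by positivity), ← ENNReal.rpow_mul,
            mul_one_div_cancel hr0.ne', ENNReal.rpow_one]

lemma lpNorm_hgradStar_le (hq : q ≠ 0) {p : ℝ≥0∞} (hp : 1 ≤ p) (f : S.V → ℂ) :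
    S.lpNorm p (S.hgradStar eps f) ≤ S.epsSup eps * S.lpNorm p f := by
  refine S.lpNorm_le_mul_of hp (fun x => ?_) fun r hr => ?_
  · rw [coe_nnnorm_hgradStar]
    exact mul_le_mul' (S.coe_nnnorm_le_epsSup eps x) (le_iSup_of_le (S.pred x) le_rfl)
  · calc ∑' x, (‖S.hgradStar eps f x‖₊ : ℝ≥0∞) ^ r * S.w x
        ≤ ∑' x, (S.epsSup eps ^ r * (‖f (S.pred x)‖₊ : ℝ≥0∞) ^ r) * S.w x := by
          gcongr with x
          rw [coe_nnnorm_hgradStar, ENNReal.mul_rpow_of_nonneg _ _ (by positivity)]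
          gcongr
          exact S.coe_nnnorm_le_epsSup eps x
      _ = S.epsSup eps ^ r * ∑' x, (‖f x‖₊ : ℝ≥0∞) ^ r * S.w x := by
          rw [S.tsum_comp_pred_mul_w hq fun u => S.epsSup eps ^ r * (‖f u‖₊ : ℝ≥0∞) ^ r,
            ← ENNReal.tsum_mul_left]
          simp only [mul_assoc]

lemma lpNorm_hgrad_le (hq : q ≠ 0) {p : ℝ≥0∞} (hp : 1 ≤ p) (f : S.V → ℂ) :
    S.lpNorm p (S.hgrad eps f) ≤ S.epsSup eps * S.lpNorm p f := by
  refine S.lpNorm_le_mul_of hp (fun x => ?_) fun r hr => ?_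
  · refine (S.coe_nnnorm_hgrad_le eps hq f x).trans (sigStarNN_le hq fun y _ => ?_)
    gcongr
    exact le_iSup_of_le y le_rfl
  · have hr0 : 0 ≤ r := zero_le_one.trans hr
    calc ∑' x, (‖S.hgrad eps f x‖₊ : ℝ≥0∞) ^ r * S.w x
        ≤ ∑' x, (S.epsSup eps ^ r * S.sigStarNN (fun y => (‖f y‖₊ : ℝ≥0∞) ^ r) x) * S.w x := by
          gcongr with x
          calc (‖S.hgrad eps f x‖₊ : ℝ≥0∞) ^ r
              ≤ (S.epsSup eps * S.sigStarNN (fun y => ‖f y‖₊) x) ^ r := by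
                rw [← sigStarNN_const_mul]
                gcongr
                exact S.coe_nnnorm_hgrad_le eps hq f x
            _ ≤ S.epsSup eps ^ r * S.sigStarNN (fun y => (‖f y‖₊ : ℝ≥0∞) ^ r) x := by
                rw [ENNReal.mul_rpow_of_nonneg _ _ hr0]
                gcongr
                exact sigStarNN_rpow_le hq _ x hr
      _ = S.epsSup eps ^ r * ∑' x, (‖f x‖₊ : ℝ≥0∞) ^ r * S.w x := by
          simp only [mul_assoc, ENNReal.tsum_mul_left, tsum_sigStarNN_mul_w hq]

lemma mul_muS_lt_mul_nnnorm_le {E : Type*} [NNNorm E] (f : S.V → E) (c t : ℝ≥0) :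
    (t : ℝ≥0∞) * S.muS {x | t < c * ‖f x‖₊} ≤ c * S.wkNorm f := by
  rcases eq_or_ne c 0 with rfl | hc
  · simp [muS]
  · have hlevel : {x | t < c * ‖f x‖₊} = {x | t / c < ‖f x‖₊} := by
      ext x
      exact (div_lt_iff₀' (pos_iff_ne_zero.2 hc)).symm
    calc (t : ℝ≥0∞) * S.muS {x | t < c * ‖f x‖₊}
        = c * (((t / c : ℝ≥0) : ℝ≥0∞) * S.muS {x | t / c < ‖f x‖₊}) := by
          rw [hlevel, ← mul_assoc, ← coe_mul, mul_div_cancel₀ _ hc]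
      _ ≤ c * S.wkNorm f := by
          gcongr
          exact le_iSup (fun s : ℝ≥0 => (s : ℝ≥0∞) * S.muS {x | s < ‖f x‖₊}) (t / c)

section Weak

variable (hq : q ≠ 0) (hb : ∃ M : ℝ, ∀ x, ‖eps x‖ ≤ M)
include hq hb

lemma wkNorm_hgradStar_le (f : S.V → ℂ) :
    S.wkNorm (S.hgradStar eps f) ≤ S.epsSup eps * S.wkNorm f := by
  set c := (S.epsSup eps).toNNReal
  rw [← coe_toNNReal (S.epsSup_ne_top eps hb)]
  refine iSup_le fun t => ?_
  have hsub : {x | t < ‖S.hgradStar eps f x‖₊} ⊆ S.pred ⁻¹' {u | t < c * ‖f u‖₊} := by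
    intro x (hx : t < _)
    refine hx.trans_le ?_
    rw [hgradStar, nnnorm_mul, RCLike.nnnorm_conj]
    gcongr
    exact S.nnnorm_le_toNNReal_epsSup eps hb x
  calc (t : ℝ≥0∞) * S.muS {x | t < ‖S.hgradStar eps f x‖₊}
      ≤ t * S.muS (S.pred ⁻¹' {u | t < c * ‖f u‖₊}) := by
        gcongr
        exact S.muS_mono hsub
    _ = t * S.muS {u | t < c * ‖f u‖₊} := by rw [S.muS_preimage_pred hq]
    _ ≤ c * S.wkNorm f := S.mul_muS_lt_mul_nnnorm_le f c t

lemma wkNorm_hgrad_le (f : S.V → ℂ) :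
    S.wkNorm (S.hgrad eps f) ≤ q * S.epsSup eps * S.wkNorm f := by
  set c := (S.epsSup eps).toNNReal
  have hc : (c : ℝ≥0∞) = S.epsSup eps := coe_toNNReal (S.epsSup_ne_top eps hb)
  refine iSup_le fun t => ?_
  have hsub : {x | t < ‖S.hgrad eps f x‖₊} ⊆ S.pred '' {u | t < c * ‖f u‖₊} := by
    intro x hx
    by_contra hx'
    have hsmall : (‖S.hgrad eps f x‖₊ : ℝ≥0∞) ≤ t := by
      refine (S.coe_nnnorm_hgrad_le eps hq f x).trans (sigStarNN_le hq fun y hy => ?_)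
      rw [← hc]
      exact_mod_cast not_lt.1 fun hlt => hx' ⟨y, hlt, hy⟩
    exact not_lt.2 (coe_le_coe.1 hsmall) hx
  calc (t : ℝ≥0∞) * S.muS {x | t < ‖S.hgrad eps f x‖₊}
      ≤ t * (q * S.muS {u | t < c * ‖f u‖₊}) := by
        gcongr
        exact (S.muS_mono hsub).trans (S.muS_image_pred_le hq _)
    _ = q * (t * S.muS {u | t < c * ‖f u‖₊}) := by ring
    _ ≤ q * S.epsSup eps * S.wkNorm f := by
        rw [mul_assoc, ← hc]
        exact mul_le_mul' le_rfl (S.mul_muS_lt_mul_nnnorm_le f c t)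

end Weak

end FlowTree

/-- properties of the ε-horizontal gradient: `∇_ε = ∇_ε ∇`, `L^p` and
`L^{1,∞}` bounds for `∇_ε*` and `∇_ε`, and the orthogonality relations
`⟨Σⁿ∇_ε* f, Σᵐ∇_ε* g⟩ = δ_{nm} ⟨∇_ε* f, ∇_ε* g⟩`. -/
theorem horizontal_gradient_properties {q : ℕ} (hq : 2 ≤ q) (S : FlowTree q)
    (eps : S.V → ℂ) (hb : ∃ M : ℝ, ∀ x, ‖eps x‖ ≤ M)
    (hz : ∀ x : S.V, ∑' y : {y | S.pred y = x}, eps y.1 = 0) :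
    (∀ f : S.V → ℂ, S.hgrad eps f = S.hgrad eps (S.grad f)) ∧
    (∀ p : ℝ≥0∞, 1 ≤ p → ∀ f : S.V → ℂ,
      S.lpNorm p (S.hgradStar eps f) ≤ S.epsSup eps * S.lpNorm p f) ∧
    (∀ f : S.V → ℂ, S.wkNorm (S.hgradStar eps f) ≤ S.epsSup eps * S.wkNorm f) ∧
    (∀ p : ℝ≥0∞, 1 ≤ p → ∀ f : S.V → ℂ,
      S.lpNorm p (S.hgrad eps f) ≤ S.epsSup eps * S.lpNorm p f) ∧
    (∀ f : S.V → ℂ, S.wkNorm (S.hgrad eps f) ≤ (q : ℝ≥0∞) * S.epsSup eps * S.wkNorm f) ∧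
    (∀ f g : S.V → ℂ, S.lpNorm 2 f ≠ ∞ → S.lpNorm 2 g ≠ ∞ → ∀ n m : ℕ,
      S.inner2 (fun x => S.hgradStar eps f (S.pred^[n] x))
          (fun x => S.hgradStar eps g (S.pred^[m] x))
        = if n = m then S.inner2 (S.hgradStar eps f) (S.hgradStar eps g) else 0) := by
  have hq0 : q ≠ 0 := by omega
  exact ⟨S.hgrad_grad eps hz, fun _ hp => S.lpNorm_hgradStar_le eps hq0 hp,
    S.wkNorm_hgradStar_le eps hq0 hb, fun _ hp => S.lpNorm_hgrad_le eps hq0 hp,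
    S.wkNorm_hgrad_le eps hq0 hb, fun f g _ _ => S.inner2_iterate_pred_hgradStar eps hq0 hz f g⟩
end

section
/- Let F ∈ ℓ²(ℕ). For every finitely supported f : T → ℂ, the function 𝒫f(x) = Σ_{n≥0} F(n) ∇_ε* f(𝔭ⁿ(x)) (for each x only finitely many terms are nonzero) satisfies ‖𝒫f‖_{L²(μ)} = ‖F‖_{ℓ²(ℕ)} ‖∇_ε* f‖_{L²(μ)} ≤ ‖F‖_{ℓ²(ℕ)} · ‖ε‖_∞ · ‖f‖_{L²(μ)}; hence 𝒫 extends to a bounded operator on L²(μ) with norm at most ‖F‖_{ℓ²(ℕ)} ‖ε‖_∞. -/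
open MeasureTheory ENNReal Set Function
open scoped NNReal ENNReal Classical

/-!
`Σ` is an isometry of `L²(μ)` with adjoint `Σ*` (as `Σ*Σ = id`), and `Σ* ∇_ε* f = 0` because `ε`
sums to zero over the successors of every vertex. Hence the functions `Σⁿ ∇_ε* f` are pairwise
orthogonal and all have the norm of `∇_ε* f`. On a single level of the tree only finitely many of
them are nonzero, so Pythagoras applies level by level; summing over the levels gives the identity.
-/

open ComplexConjugate

namespace FlowTree

variable {q : ℕ} (S : FlowTree q)

def levelSet (i : ℤ) : Set S.V := {x | S.level x = i}

noncomputable def l2NormSq (h : S.V → ℂ) : ℝ≥0∞ := ∑' x, (‖h x‖₊ : ℝ≥0∞) ^ 2 * S.w x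

lemma level_iterate_pred (n : ℕ) (x : S.V) : S.level (S.pred^[n] x) = S.level x + n := by
  induction n with
  | zero => simp
  | succ n ih => rw [iterate_succ_apply', S.level_pred, ih]; push_cast; ring

lemma iterate_pred_mem_levelSet_iff {n : ℕ} {x : S.V} {i : ℤ} :
    S.pred^[n] x ∈ S.levelSet (i + n) ↔ x ∈ S.levelSet i := by
  simp [levelSet, level_iterate_pred]

lemma sig_iterate_apply (n : ℕ) (h : S.V → ℂ) (x : S.V) : S.sig^[n] h x = h (S.pred^[n] x) := by
  induction n generalizing h with
  | zero => rfl
  | succ n ih => rw [iterate_succ_apply, ih, iterate_succ_apply']; rfl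

lemma hasFiniteSupport_sig {h : S.V → ℂ} (hh : h.HasFiniteSupport) : (S.sig h).HasFiniteSupport :=
  Set.Finite.preimage' hh fun z _ => S.succ_finite z

lemma hasFiniteSupport_sig_iterate {h : S.V → ℂ} (hh : h.HasFiniteSupport) (n : ℕ) :
    (S.sig^[n] h).HasFiniteSupport := by
  induction n with
  | zero => exact hh
  | succ n ih => rw [iterate_succ_apply']; exact S.hasFiniteSupport_sig ih

lemma hasFiniteSupport_hgradStar (eps : S.V → ℂ) {f : S.V → ℂ} (hf : f.HasFiniteSupport) :
    (S.hgradStar eps f).HasFiniteSupport :=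
  Set.Finite.subset (S.hasFiniteSupport_sig hf) fun _ hx => right_ne_zero_of_mul hx

lemma wR_pred (hq : q ≠ 0) (x : S.V) : S.wR (S.pred x) = q * S.wR x := by
  rw [wR, wR, S.level_pred, zpow_add_one₀ (by exact_mod_cast hq), mul_comm]

lemma wR_nonneg (x : S.V) : 0 ≤ S.wR x := zpow_nonneg (Nat.cast_nonneg q) _

lemma w_eq_ofReal (hq : q ≠ 0) (x : S.V) : S.w x = ENNReal.ofReal (S.wR x) := by
  rw [w, wR, ← Real.rpow_intCast,
    ← ENNReal.ofReal_rpow_of_pos (Nat.cast_pos.2 (Nat.pos_of_ne_zero hq)), ENNReal.ofReal_natCast]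

lemma sigStar_sig (hq : q ≠ 0) (h : S.V → ℂ) : S.sigStar (S.sig h) = h := by
  funext z
  have hconst : ∑' y : {y | S.pred y = z}, S.sig h y = ∑' _ : {y | S.pred y = z}, h z :=
    tsum_congr fun y => congrArg h y.2
  rw [sigStar, hconst, _root_.tsum_const, show Nat.card {y | S.pred y = z} = q from S.succ_card z,
    nsmul_eq_mul, inv_mul_cancel_left₀ (by exact_mod_cast hq)]

lemma sigStar_hgradStar (eps f : S.V → ℂ)
    (hz : ∀ x : S.V, ∑' y : {y | S.pred y = x}, eps y.1 = 0) :
    S.sigStar (S.hgradStar eps f) = 0 := by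
  funext z
  have hfactor : ∑' y : {y | S.pred y = z}, S.hgradStar eps f y
      = conj (∑' y : {y | S.pred y = z}, eps y) * f z := by
    rw [Complex.conj_tsum, ← _root_.tsum_mul_right]
    exact tsum_congr fun y => by rw [hgradStar, y.2]
  rw [sigStar, hfactor, hz z, map_zero, zero_mul, mul_zero, Pi.zero_apply]

lemma sigStar_indicator_levelSet {g : S.V → ℂ} (hg : S.sigStar g = 0) (i : ℤ) :
    S.sigStar ((S.levelSet i).indicator g) = 0 := by
  funext z
  have hmem : ∀ y : {y | S.pred y = z}, y.1 ∈ S.levelSet i ↔ S.level z = i + 1 := fun y => by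
    have := S.level_pred y
    rw [y.2] at this
    simp only [levelSet, mem_ofPred_eq]
    omega
  by_cases hz : S.level z = i + 1
  · rw [sigStar, tsum_congr fun y => Set.indicator_of_mem ((hmem y).2 hz) g]
    exact congrFun hg z
  · simp [sigStar, Set.indicator_of_notMem ((hmem _).not.2 hz)]

lemma inner2_conj_symm (h k : S.V → ℂ) : S.inner2 k h = conj (S.inner2 h k) := by
  simp only [inner2, Complex.conj_tsum, map_mul, Complex.conj_conj, Complex.conj_ofReal]
  exact tsum_congr fun x => by ring

lemma inner2_zero_left (h : S.V → ℂ) : S.inner2 0 h = 0 := by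
  simp [inner2]

lemma inner2_eq_sum {h : S.V → ℂ} {A : Finset S.V} (hA : support h ⊆ A) (k : S.V → ℂ) :
    S.inner2 h k = ∑ x ∈ A, h x * conj (k x) * S.wR x :=
  tsum_eq_sum fun x hx => by rw [notMem_support.1 fun hx' => hx (hA hx'), zero_mul, zero_mul]

lemma inner2_sig_right (hq : q ≠ 0) {g : S.V → ℂ} (hg : g.HasFiniteSupport) (h : S.V → ℂ) :
    S.inner2 g (S.sig h) = S.inner2 (S.sigStar g) h := by
  have hsum : Summable fun x => g x * conj (S.sig h x) * S.wR x :=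
    summable_of_hasFiniteSupport <| Set.Finite.subset hg fun _ hx =>
      left_ne_zero_of_mul (left_ne_zero_of_mul hx)
  rw [inner2, ← (hsum.hasSum.tsum_fiberwise S.pred).tsum_eq, inner2]
  refine tsum_congr fun z => ?_
  change ∑' x : {y | S.pred y = z}, _ = _
  have hfiber : ∀ x : {y | S.pred y = z},
      g x * conj (S.sig h x) * S.wR x = g x * ((q : ℂ)⁻¹ * conj (h z) * S.wR z) :=
    fun ⟨x, hx⟩ => by
      obtain rfl : S.pred x = z := hx
      rw [sig, S.wR_pred hq]
      push_cast
      field_simp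
  rw [tsum_congr hfiber, _root_.tsum_mul_right, sigStar]
  ring

lemma inner2_sig_sig (hq : q ≠ 0) {g : S.V → ℂ} (hg : g.HasFiniteSupport) (h : S.V → ℂ) :
    S.inner2 (S.sig g) (S.sig h) = S.inner2 g h := by
  rw [S.inner2_sig_right hq (S.hasFiniteSupport_sig hg), S.sigStar_sig hq]

lemma inner2_sig_iterate (hq : q ≠ 0) {g : S.V → ℂ} (hg : g.HasFiniteSupport) (h : S.V → ℂ)
    (n : ℕ) : S.inner2 (S.sig^[n] g) (S.sig^[n] h) = S.inner2 g h := by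
  induction n with
  | zero => rfl
  | succ n ih =>
    rw [iterate_succ_apply', iterate_succ_apply',
      S.inner2_sig_sig hq (S.hasFiniteSupport_sig_iterate hg n), ih]

lemma inner2_sig_iterate_eq_zero (hq : q ≠ 0) {g : S.V → ℂ} (hg : g.HasFiniteSupport)
    (hg0 : S.sigStar g = 0) (h : S.V → ℂ) {n m : ℕ} (hnm : n < m) :
    S.inner2 (S.sig^[n] g) (S.sig^[m] h) = 0 := by
  obtain ⟨k, rfl⟩ := Nat.exists_eq_add_of_lt hnm
  rw [add_assoc, iterate_add_apply, S.inner2_sig_iterate hq hg, iterate_succ_apply',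
    S.inner2_sig_right hq hg, hg0, inner2_zero_left]

lemma inner2_sum_smul_self {ι : Type*} (s : Finset ι) (c : ι → ℂ) {u : ι → S.V → ℂ}
    (hu : ∀ i, (u i).HasFiniteSupport)
    (horth : ∀ i ∈ s, ∀ k ∈ s, i ≠ k → S.inner2 (u i) (u k) = 0) :
    S.inner2 (∑ i ∈ s, c i • u i) (∑ i ∈ s, c i • u i)
      = ∑ i ∈ s, c i * conj (c i) * S.inner2 (u i) (u i) := by
  set A := s.biUnion fun i => (hu i).toFinset
  have hA : ∀ i ∈ s, support (u i) ⊆ A := fun i hi x hx =>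
    Finset.mem_biUnion.2 ⟨i, hi, (hu i).mem_toFinset.2 hx⟩
  have hsumA : support (∑ i ∈ s, c i • u i) ⊆ A := fun x hx => by
    by_contra hxA
    rw [mem_support, Finset.sum_apply] at hx
    refine hx (Finset.sum_eq_zero fun i hi => ?_)
    rw [Pi.smul_apply, notMem_support.1 fun hx' => hxA (hA i hi hx'), smul_zero]
  calc S.inner2 (∑ i ∈ s, c i • u i) (∑ i ∈ s, c i • u i)
      = ∑ x ∈ A, ∑ i ∈ s, ∑ k ∈ s, c i * conj (c k) * (u i x * conj (u k x) * S.wR x) := by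
        refine (S.inner2_eq_sum hsumA _).trans (Finset.sum_congr rfl fun x _ => ?_)
        simp only [Finset.sum_apply, Pi.smul_apply, smul_eq_mul, map_sum, map_mul,
          Finset.sum_mul, Finset.mul_sum]
        rw [Finset.sum_comm]
        exact Finset.sum_congr rfl fun i _ => Finset.sum_congr rfl fun k _ => by ring
    _ = ∑ i ∈ s, ∑ k ∈ s, c i * conj (c k) * S.inner2 (u i) (u k) := by
        rw [Finset.sum_comm]
        refine Finset.sum_congr rfl fun i hi => ?_
        rw [Finset.sum_comm]
        exact Finset.sum_congr rfl fun k _ => by rw [S.inner2_eq_sum (hA i hi), Finset.mul_sum]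
    _ = _ := Finset.sum_congr rfl fun i hi =>
        Finset.sum_eq_single i (fun k hk hki => by rw [horth i hi k hk hki.symm, mul_zero])
          (absurd hi)

lemma inner2_self (h : S.V → ℂ) : S.inner2 h h = ((∑' x, ‖h x‖ ^ 2 * S.wR x : ℝ) : ℂ) := by
  rw [Complex.ofReal_tsum]
  refine tsum_congr fun x => ?_
  rw [Complex.mul_conj']
  push_cast
  ring

lemma re_inner2_self_nonneg (h : S.V → ℂ) : 0 ≤ (S.inner2 h h).re := by
  rw [inner2_self, Complex.ofReal_re]
  exact tsum_nonneg fun x => mul_nonneg (sq_nonneg _) (S.wR_nonneg x)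

lemma l2NormSq_eq_ofReal_re_inner2 (hq : q ≠ 0) {h : S.V → ℂ} (hh : h.HasFiniteSupport) :
    S.l2NormSq h = ENNReal.ofReal (S.inner2 h h).re := by
  have hsum : Summable fun x => ‖h x‖ ^ 2 * S.wR x :=
    summable_of_hasFiniteSupport <| Set.Finite.subset hh fun x hx => by
      simpa using left_ne_zero_of_mul hx
  rw [inner2_self, Complex.ofReal_re,
    ENNReal.ofReal_tsum_of_nonneg (fun x => mul_nonneg (sq_nonneg _) (S.wR_nonneg x)) hsum]
  refine tsum_congr fun x => ?_
  rw [ENNReal.ofReal_mul (sq_nonneg _), ← S.w_eq_ofReal hq, ENNReal.ofReal_pow (norm_nonneg _),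
    ofReal_norm, enorm_eq_nnnorm]

lemma l2NormSq_sig_iterate (hq : q ≠ 0) {h : S.V → ℂ} (hh : h.HasFiniteSupport) (n : ℕ) :
    S.l2NormSq (S.sig^[n] h) = S.l2NormSq h := by
  rw [S.l2NormSq_eq_ofReal_re_inner2 hq (S.hasFiniteSupport_sig_iterate hh n),
    S.inner2_sig_iterate hq hh, S.l2NormSq_eq_ofReal_re_inner2 hq hh]

lemma l2NormSq_sum_smul (hq : q ≠ 0) {ι : Type*} (s : Finset ι) (c : ι → ℂ)
    {u : ι → S.V → ℂ} (hu : ∀ i, (u i).HasFiniteSupport)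
    (horth : ∀ i ∈ s, ∀ k ∈ s, i ≠ k → S.inner2 (u i) (u k) = 0) :
    S.l2NormSq (∑ i ∈ s, c i • u i) = ∑ i ∈ s, (‖c i‖₊ : ℝ≥0∞) ^ 2 * S.l2NormSq (u i) := by
  have hfin : (∑ i ∈ s, c i • u i).HasFiniteSupport := by
    simpa [Finset.sum_fn] using HasFiniteSupport.sum (fun i => (hu i).smul_right fun _ => c i) s
  rw [S.l2NormSq_eq_ofReal_re_inner2 hq hfin, S.inner2_sum_smul_self s c hu horth, Complex.re_sum,
    ENNReal.ofReal_sum_of_nonneg]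
  · refine Finset.sum_congr rfl fun i _ => ?_
    rw [Complex.mul_conj', ← Complex.ofReal_pow, Complex.re_ofReal_mul,
      ENNReal.ofReal_mul (sq_nonneg _), S.l2NormSq_eq_ofReal_re_inner2 hq (hu i),
      ENNReal.ofReal_pow (norm_nonneg _), ofReal_norm, enorm_eq_nnnorm]
  · exact fun i _ => by
      rw [Complex.mul_conj', ← Complex.ofReal_pow, Complex.re_ofReal_mul]
      exact mul_nonneg (sq_nonneg _) (S.re_inner2_self_nonneg _)

lemma exists_indicator_levelSet_eq_zero {g : S.V → ℂ} (hg : g.HasFiniteSupport) (j : ℤ) :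
    ∃ K : ℕ, ∀ n ≥ K, (S.levelSet (j + n)).indicator g = 0 := by
  obtain ⟨M, hM⟩ := (Set.Finite.image S.level hg).bddAbove
  refine ⟨(M - j + 1).toNat, fun n hn => funext fun x => Set.indicator_apply_eq_zero.2 fun hx => ?_⟩
  by_contra hgx
  have := hM ⟨x, hgx, rfl⟩
  simp only [levelSet, mem_ofPred_eq] at hx
  omega

lemma tsum_l2NormSq_indicator_levelSet (h : S.V → ℂ) :
    ∑' i, S.l2NormSq ((S.levelSet i).indicator h) = S.l2NormSq h := by
  simp only [l2NormSq]
  rw [ENNReal.tsum_comm]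
  refine tsum_congr fun x => (tsum_eq_single (S.level x) fun i hi => ?_).trans ?_
  · simp [Set.indicator_of_notMem (show x ∉ S.levelSet i from Ne.symm hi)]
  · simp [Set.indicator_of_mem (show x ∈ S.levelSet (S.level x) from rfl)]

lemma indicator_levelSet_series_eq_sum {g : S.V → ℂ} (F : ℕ → ℂ) {j : ℤ} {K : ℕ}
    (hK : ∀ n ≥ K, (S.levelSet (j + n)).indicator g = 0) :
    (S.levelSet j).indicator (fun x => ∑' n, F n * g (S.pred^[n] x))
      = ∑ n ∈ Finset.range K, F n • S.sig^[n] ((S.levelSet (j + n)).indicator g) := by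
  funext x
  simp only [Finset.sum_apply, Pi.smul_apply, smul_eq_mul, sig_iterate_apply]
  by_cases hx : x ∈ S.levelSet j
  · rw [Set.indicator_of_mem hx, tsum_eq_sum fun n hn => ?_]
    · exact Finset.sum_congr rfl fun n _ => by
        rw [Set.indicator_of_mem (S.iterate_pred_mem_levelSet_iff.2 hx)]
    · have := congrFun (hK n (by simpa using hn)) (S.pred^[n] x)
      rw [Set.indicator_of_mem (S.iterate_pred_mem_levelSet_iff.2 hx)] at this
      rw [this, Pi.zero_apply, mul_zero]
  · rw [Set.indicator_of_notMem hx]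
    exact (Finset.sum_eq_zero fun n _ => by
      rw [Set.indicator_of_notMem (S.iterate_pred_mem_levelSet_iff.not.2 hx), mul_zero]).symm

lemma l2NormSq_indicator_levelSet_series (hq : q ≠ 0) {g : S.V → ℂ} (hg : g.HasFiniteSupport)
    (hg0 : S.sigStar g = 0) (F : ℕ → ℂ) (j : ℤ) :
    S.l2NormSq ((S.levelSet j).indicator fun x => ∑' n, F n * g (S.pred^[n] x))
      = ∑' n, (‖F n‖₊ : ℝ≥0∞) ^ 2 * S.l2NormSq ((S.levelSet (j + n)).indicator g) := by
  obtain ⟨K, hK⟩ := S.exists_indicator_levelSet_eq_zero hg j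
  have hfin : ∀ i, ((S.levelSet i).indicator g).HasFiniteSupport := fun i =>
    Set.Finite.subset hg fun _ hx => (Set.indicator_apply_ne_zero.1 hx).2
  have horth : ∀ n m, n ≠ m → S.inner2 (S.sig^[n] ((S.levelSet (j + n)).indicator g))
      (S.sig^[m] ((S.levelSet (j + m)).indicator g)) = 0 := fun n m hnm => by
    rcases hnm.lt_or_gt with hlt | hgt
    · exact S.inner2_sig_iterate_eq_zero hq (hfin _) (S.sigStar_indicator_levelSet hg0 _) _ hlt
    · rw [inner2_conj_symm, S.inner2_sig_iterate_eq_zero hq (hfin _)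
        (S.sigStar_indicator_levelSet hg0 _) _ hgt, map_zero]
  rw [S.indicator_levelSet_series_eq_sum F hK, S.l2NormSq_sum_smul hq _ _
    (fun n => S.hasFiniteSupport_sig_iterate (hfin _) n) fun n _ m _ => horth n m,
    tsum_eq_sum (s := Finset.range K) fun n hn => by
      rw [hK n (by simpa using hn), show S.l2NormSq 0 = 0 by simp [l2NormSq], mul_zero]]
  exact Finset.sum_congr rfl fun n _ => by rw [S.l2NormSq_sig_iterate hq (hfin _)]

lemma l2NormSq_series (hq : q ≠ 0) {g : S.V → ℂ} (hg : g.HasFiniteSupport)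
    (hg0 : S.sigStar g = 0) (F : ℕ → ℂ) :
    S.l2NormSq (fun x => ∑' n, F n * g (S.pred^[n] x))
      = (∑' n, (‖F n‖₊ : ℝ≥0∞) ^ 2) * S.l2NormSq g := by
  calc S.l2NormSq (fun x => ∑' n, F n * g (S.pred^[n] x))
      = ∑' j : ℤ, ∑' n, (‖F n‖₊ : ℝ≥0∞) ^ 2 * S.l2NormSq ((S.levelSet (j + n)).indicator g) := by
        rw [← S.tsum_l2NormSq_indicator_levelSet]
        exact tsum_congr fun j => S.l2NormSq_indicator_levelSet_series hq hg hg0 F j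
    _ = ∑' n, (‖F n‖₊ : ℝ≥0∞) ^ 2 * ∑' j : ℤ, S.l2NormSq ((S.levelSet (j + n)).indicator g) := by
        rw [ENNReal.tsum_comm]
        exact tsum_congr fun n => ENNReal.tsum_mul_left
    _ = ∑' n, (‖F n‖₊ : ℝ≥0∞) ^ 2 * S.l2NormSq g := tsum_congr fun n => congrArg _ <|
        ((Equiv.addRight (n : ℤ)).tsum_eq fun i => S.l2NormSq ((S.levelSet i).indicator g)).trans
          (S.tsum_l2NormSq_indicator_levelSet g)
    _ = _ := ENNReal.tsum_mul_right

lemma l2NormSq_hgradStar_le (hq : q ≠ 0) (eps : S.V → ℂ) {f : S.V → ℂ}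
    (hf : f.HasFiniteSupport) :
    S.l2NormSq (S.hgradStar eps f) ≤ S.epsSup eps ^ 2 * S.l2NormSq f := by
  calc S.l2NormSq (S.hgradStar eps f)
      ≤ ∑' x, S.epsSup eps ^ 2 * ((‖S.sig f x‖₊ : ℝ≥0∞) ^ 2 * S.w x) :=
        ENNReal.tsum_le_tsum fun x => by
          rw [hgradStar, nnnorm_mul, RCLike.nnnorm_conj, ENNReal.coe_mul, ← mul_assoc, ← mul_pow]
          gcongr
          · exact le_iSup (fun x => (‖eps x‖₊ : ℝ≥0∞)) x
          · rfl
    _ = S.epsSup eps ^ 2 * S.l2NormSq f := by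
        rw [ENNReal.tsum_mul_left]
        exact congrArg _ (S.l2NormSq_sig_iterate hq hf 1)

lemma lpNorm_two (h : S.V → ℂ) : S.lpNorm 2 h = S.l2NormSq h ^ (1 / 2 : ℝ) := by
  simp [lpNorm, l2NormSq]

lemma lpNorm_two_series (hq : q ≠ 0) {g : S.V → ℂ} (hg : g.HasFiniteSupport)
    (hg0 : S.sigStar g = 0) (F : ℕ → ℂ) :
    S.lpNorm 2 (fun x => ∑' n, F n * g (S.pred^[n] x))
      = (∑' n, (‖F n‖₊ : ℝ≥0∞) ^ (2 : ℝ)) ^ (1 / 2 : ℝ) * S.lpNorm 2 g := by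
  rw [S.lpNorm_two, S.lpNorm_two, S.l2NormSq_series hq hg hg0,
    ENNReal.mul_rpow_of_nonneg _ _ (by norm_num)]
  simp only [ENNReal.rpow_two]

lemma lpNorm_two_hgradStar_le (hq : q ≠ 0) (eps : S.V → ℂ) {f : S.V → ℂ}
    (hf : f.HasFiniteSupport) : S.lpNorm 2 (S.hgradStar eps f) ≤ S.epsSup eps * S.lpNorm 2 f := by
  rw [S.lpNorm_two, S.lpNorm_two]
  calc S.l2NormSq (S.hgradStar eps f) ^ (1 / 2 : ℝ)
      ≤ (S.epsSup eps ^ 2 * S.l2NormSq f) ^ (1 / 2 : ℝ) :=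
        ENNReal.rpow_le_rpow (S.l2NormSq_hgradStar_le hq eps hf) (by norm_num)
    _ = S.epsSup eps * S.l2NormSq f ^ (1 / 2 : ℝ) := by
        rw [ENNReal.mul_rpow_of_nonneg _ _ (by norm_num), ← ENNReal.rpow_natCast,
          ← ENNReal.rpow_mul]
        norm_num

end FlowTree

theorem P_operator_L2_general {q : ℕ} (hq : 2 ≤ q) (S : FlowTree q)
    (eps : S.V → ℂ)
    (hz : ∀ x : S.V, ∑' y : {y | S.pred y = x}, eps y.1 = 0)
    (F : ℕ → ℂ)
    (f : S.V → ℂ) (hf : (Function.support f).Finite) :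
    S.lpNorm 2 (fun x => ∑' n : ℕ, F n * S.hgradStar eps f (S.pred^[n] x))
        = (∑' n : ℕ, (‖F n‖₊ : ℝ≥0∞) ^ (2 : ℝ)) ^ (1/(2:ℝ)) *
            S.lpNorm 2 (S.hgradStar eps f) ∧
    S.lpNorm 2 (fun x => ∑' n : ℕ, F n * S.hgradStar eps f (S.pred^[n] x))
        ≤ (∑' n : ℕ, (‖F n‖₊ : ℝ≥0∞) ^ (2 : ℝ)) ^ (1/(2:ℝ)) * S.epsSup eps *
            S.lpNorm 2 f := by
  have hq0 : q ≠ 0 := by omega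
  have hseries := S.lpNorm_two_series hq0 (S.hasFiniteSupport_hgradStar eps hf)
    (S.sigStar_hgradStar eps f hz) F
  refine ⟨hseries, ?_⟩
  rw [hseries, mul_assoc]
  gcongr
  exact S.lpNorm_two_hgradStar_le hq0 eps hf

/-- for `F ∈ ℓ²(ℕ)`, the operator `𝒫f = Σ_{n≥0} F(n) Σⁿ∇_ε* f` satisfies
`‖𝒫f‖₂ = ‖F‖_{ℓ²} ‖∇_ε* f‖₂ ≤ ‖F‖_{ℓ²} ‖ε‖_∞ ‖f‖₂`. -/
theorem P_operator_L2 {q : ℕ} (hq : 2 ≤ q) (S : FlowTree q)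
    (eps : S.V → ℂ) (hb : ∃ M : ℝ, ∀ x, ‖eps x‖ ≤ M)
    (hz : ∀ x : S.V, ∑' y : {y | S.pred y = x}, eps y.1 = 0)
    (F : ℕ → ℂ) (hF : Summable (fun n => ‖F n‖ ^ 2))
    (f : S.V → ℂ) (hf : (Function.support f).Finite) :
    S.lpNorm 2 (fun x => ∑' n : ℕ, F n * S.hgradStar eps f (S.pred^[n] x))
        = (∑' n : ℕ, (‖F n‖₊ : ℝ≥0∞) ^ (2 : ℝ)) ^ (1/(2:ℝ)) *
            S.lpNorm 2 (S.hgradStar eps f) ∧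
    S.lpNorm 2 (fun x => ∑' n : ℕ, F n * S.hgradStar eps f (S.pred^[n] x))
        ≤ (∑' n : ℕ, (‖F n‖₊ : ℝ≥0∞) ^ (2 : ℝ)) ^ (1/(2:ℝ)) * S.epsSup eps *
            S.lpNorm 2 f :=
  P_operator_L2_general hq S eps hz F f hf
end
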